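/- Let f, g : I → ℝ be continuous at ω₀ and q,ω-differentiable on I. Then for all a, b ∈ I, the integration by parts formula holds: ∫_{a}^{b} f(t) D_{q,ω}g(t) d_{q,ω}t = f(b)g(b) − f(a)g(a) − ∫_{a}^{b} D_{q,ω}f(t) · g(qt+ω) d_{q,ω}t. -/

import Mathlib

open Filter Topology

noncomputable section

/-- The fixed point `ω₀ := ω/(1-q)` of `t ↦ qt + ω`. -/
def hahnOmega0 (q ω : ℝ) : ℝ := ω / (1 - q)

/-- The Hahn difference operator `D_{q,ω}`:
`D_{q,ω}f(t) = (f(qt+ω) - f t)/((qt+ω) - t)` for `t ≠ ω₀`, and the ordinary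
derivative at `t = ω₀`. -/
def hahnDeriv (q ω : ℝ) (f : ℝ → ℝ) (t : ℝ) : ℝ :=
  if t = hahnOmega0 q ω then deriv f t
  else (f (q * t + ω) - f t) / ((q * t + ω) - t)

/-- `f` is `q,ω`-differentiable at `t` (automatic off `ω₀`; at `ω₀` it means
ordinary (Fréchet) differentiability). -/
def HahnDiffAt (q ω : ℝ) (f : ℝ → ℝ) (t : ℝ) : Prop :=
  t = hahnOmega0 q ω → DifferentiableAt ℝ f t

/-- The point `x q^k + [k]_{q,ω}` where `[k]_{q,ω} = ω(1-q^k)/(1-q)`. -/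
def jnPoint (q ω x : ℝ) (k : ℕ) : ℝ := x * q ^ k + ω * (1 - q ^ k) / (1 - q)

/-- Partial sums of the Jackson–Nörlund series at `x`. -/
def jnPartial (q ω : ℝ) (f : ℝ → ℝ) (x : ℝ) (n : ℕ) : ℝ :=
  ∑ k ∈ Finset.range n, q ^ k * f (jnPoint q ω x k)

/-- Convergence of the Jackson–Nörlund series `Σ q^k f(x q^k + [k]_{q,ω})`. -/
def JNConvergesAt (q ω : ℝ) (f : ℝ → ℝ) (x : ℝ) : Prop :=
  ∃ S : ℝ, Tendsto (jnPartial q ω f x) atTop (𝓝 S)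

/-- The Jackson–Nörlund integral `∫_{ω₀}^{x} f(t) d_{q,ω}t`. -/
def jnSum (q ω : ℝ) (f : ℝ → ℝ) (x : ℝ) : ℝ :=
  (x * (1 - q) - ω) * limUnder atTop (jnPartial q ω f x)

/-- The Jackson–Nörlund integral `∫_{a}^{b} f(t) d_{q,ω}t`. -/
def jnIntegral (q ω : ℝ) (f : ℝ → ℝ) (a b : ℝ) : ℝ :=
  jnSum q ω f b - jnSum q ω f a

/-- The orbit `{q^n s + [n]_{q,ω} : n ∈ ℕ}`. -/
def qwOrbit (q ω s : ℝ) : Set ℝ := Set.range (jnPoint q ω s)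

/-- The orbit together with `ω₀`, i.e. `[s]_{q,ω}`. -/
def qwClosedOrbit (q ω s : ℝ) : Set ℝ := qwOrbit q ω s ∪ {hahnOmega0 q ω}

/-- The `q,ω`-interval `[a,b]_{q,ω}`. -/
def qwInterval (q ω a b : ℝ) : Set ℝ :=
  qwOrbit q ω a ∪ qwOrbit q ω b ∪ {hahnOmega0 q ω}

/-!
Off the fixed point `ω₀` of `σ t = qt + ω` the Hahn derivative satisfies the product rule
`D(fg) = f·Dg + Df·(g ∘ σ)`. The Jackson–Nörlund sum of a Hahn derivative `Dh` from `ω₀` to `x`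
telescopes along the orbit `σᵏ x → ω₀` to `h x - h ω₀` when `h` is continuous at `ω₀`. If `f` is
differentiable at `ω₀`, then `Df` is continuous at `ω₀`, so `Df·(g ∘ σ)` is bounded near `ω₀` and
its series converges against the geometric weights `qᵏ`; integrating the product rule then gives
the formula.
-/

open Asymptotics

variable {q ω x : ℝ}

lemma mul_one_sub_sub_eq (hq : q ≠ 1) (x : ℝ) :
    x * (1 - q) - ω = (1 - q) * (x - hahnOmega0 q ω) := by
  have : (1 : ℝ) - q ≠ 0 := sub_ne_zero.2 hq.symm
  unfold hahnOmega0
  field_simp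

lemma mul_one_sub_sub_ne_zero (hq : q ≠ 1) (hx : x ≠ hahnOmega0 q ω) : x * (1 - q) - ω ≠ 0 := by
  rw [mul_one_sub_sub_eq hq]
  exact mul_ne_zero (sub_ne_zero.2 hq.symm) (sub_ne_zero.2 hx)

lemma shift_sub_hahnOmega0 (hq : q ≠ 1) (t : ℝ) :
    q * t + ω - hahnOmega0 q ω = q * (t - hahnOmega0 q ω) := by
  have : (1 : ℝ) - q ≠ 0 := sub_ne_zero.2 hq.symm
  unfold hahnOmega0
  field_simp
  ring

lemma shift_hahnOmega0 (hq : q ≠ 1) : q * hahnOmega0 q ω + ω = hahnOmega0 q ω := by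
  linear_combination shift_sub_hahnOmega0 (ω := ω) hq (hahnOmega0 q ω)

lemma shift_sub_self (hq : q ≠ 1) (t : ℝ) :
    q * t + ω - t = (q - 1) * (t - hahnOmega0 q ω) := by
  linear_combination shift_sub_hahnOmega0 (ω := ω) hq t

lemma shift_sub_self_ne_zero (hq : q ≠ 1) {t : ℝ} (ht : t ≠ hahnOmega0 q ω) :
    q * t + ω - t ≠ 0 := by
  rw [shift_sub_self hq]
  exact mul_ne_zero (sub_ne_zero.2 hq) (sub_ne_zero.2 ht)

lemma jnPoint_eq (hq : q ≠ 1) (x : ℝ) (k : ℕ) :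
    jnPoint q ω x k = hahnOmega0 q ω + q ^ k * (x - hahnOmega0 q ω) := by
  have : (1 : ℝ) - q ≠ 0 := sub_ne_zero.2 hq.symm
  unfold jnPoint hahnOmega0
  field_simp
  ring

lemma jnPoint_zero (x : ℝ) : jnPoint q ω x 0 = x := by
  simp [jnPoint]

lemma jnPoint_succ (hq : q ≠ 1) (x : ℝ) (k : ℕ) :
    jnPoint q ω x (k + 1) = q * jnPoint q ω x k + ω := by
  have : (1 : ℝ) - q ≠ 0 := sub_ne_zero.2 hq.symm
  unfold jnPoint
  field_simp
  ring

lemma jnPoint_ne_hahnOmega0 (hq0 : q ≠ 0) (hq1 : q ≠ 1) (hx : x ≠ hahnOmega0 q ω) (k : ℕ) :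
    jnPoint q ω x k ≠ hahnOmega0 q ω := by
  rw [jnPoint_eq hq1, Ne, add_eq_left]
  exact mul_ne_zero (pow_ne_zero k hq0) (sub_ne_zero.2 hx)

lemma tendsto_jnPoint (hq : |q| < 1) (x : ℝ) :
    Tendsto (jnPoint q ω x) atTop (𝓝 (hahnOmega0 q ω)) := by
  have hq1 : q ≠ 1 := ((le_abs_self q).trans_lt hq).ne
  have := (tendsto_pow_atTop_nhds_zero_of_abs_lt_one hq).mul_const (x - hahnOmega0 q ω)
  simpa [funext (jnPoint_eq (ω := ω) hq1 x)] using this.const_add (hahnOmega0 q ω)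

lemma hahnDeriv_mul_of_ne (hq : q ≠ 1) (f g : ℝ → ℝ) {t : ℝ} (ht : t ≠ hahnOmega0 q ω) :
    hahnDeriv q ω (f * g) t = f t * hahnDeriv q ω g t + hahnDeriv q ω f t * g (q * t + ω) := by
  have := shift_sub_self_ne_zero (ω := ω) hq ht
  simp only [hahnDeriv, if_neg ht, Pi.mul_apply]
  field_simp
  ring

/-- Off `ω₀`, `Df - f'(ω₀)` is the difference quotient, over `qt + ω - t`, of the remainder `r` of
the linearization of `f` at `ω₀`; and `r` is `o(t - ω₀)` at both `t` and `qt + ω`. -/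
lemma continuousAt_hahnDeriv (hq : q ≠ 1) {f : ℝ → ℝ}
    (hf : DifferentiableAt ℝ f (hahnOmega0 q ω)) :
    ContinuousAt (hahnDeriv q ω f) (hahnOmega0 q ω) := by
  set ω₀ := hahnOmega0 q ω
  set r : ℝ → ℝ := fun y => f y - f ω₀ - (y - ω₀) • deriv f ω₀
  have hr : r =o[𝓝 ω₀] fun y => y - ω₀ := hf.hasDerivAt.isLittleO
  have hσ : Tendsto (fun t => q * t + ω) (𝓝 ω₀) (𝓝 ω₀) :=
    Continuous.tendsto' (by fun_prop) ω₀ ω₀ (shift_hahnOmega0 hq)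
  have hrσ : (fun t => r (q * t + ω)) =o[𝓝 ω₀] fun t => t - ω₀ := by
    refine (hr.comp_tendsto hσ).trans_isBigO ?_
    exact (isBigO_const_mul_self q _ _).congr_left fun t => (shift_sub_hahnOmega0 hq t).symm
  have hquot : Tendsto (fun t => (r (q * t + ω) - r t) / (q * t + ω - t)) (𝓝 ω₀) (𝓝 0) := by
    refine ((hrσ.sub hr).trans_isBigO ?_).tendsto_div_nhds_zero
    simpa [shift_sub_self hq] using isBigO_self_const_mul (sub_ne_zero.2 hq) _ (𝓝 ω₀)
  rw [← continuousWithinAt_compl_self, ContinuousWithinAt, hahnDeriv, if_pos rfl]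
  refine (by simpa using (hquot.mono_left nhdsWithin_le_nhds).const_add (deriv f ω₀) :
    Tendsto _ (𝓝[≠] ω₀) (𝓝 (deriv f ω₀))).congr' ?_
  filter_upwards [self_mem_nhdsWithin] with t (ht : t ≠ ω₀)
  have := shift_sub_self_ne_zero (ω := ω) hq ht
  rw [hahnDeriv, if_neg ht]
  simp only [r, smul_eq_mul]
  field_simp
  ring

lemma jnConvergesAt_of_continuousAt (hq : |q| < 1) {u : ℝ → ℝ}
    (hu : ContinuousAt u (hahnOmega0 q ω)) (x : ℝ) : JNConvergesAt q ω u x := by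
  have hbdd : (fun k => u (jnPoint q ω x k)) =O[atTop] fun _ => (1 : ℝ) :=
    (hu.tendsto.comp (tendsto_jnPoint hq x)).isBigO_one ℝ
  have hsum : Summable fun k => q ^ k * u (jnPoint q ω x k) :=
    summable_of_isBigO_nat' (summable_geometric_of_abs_lt_one hq)
      (by simpa using (isBigO_refl (fun k => q ^ k) atTop).mul hbdd)
  exact ⟨_, hsum.hasSum.tendsto_sum_nat⟩

lemma jnSum_hahnOmega0 (hq : q ≠ 1) (u : ℝ → ℝ) : jnSum q ω u (hahnOmega0 q ω) = 0 := by
  simp [jnSum, mul_one_sub_sub_eq hq]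

lemma jnSum_eq_of_tendsto {u : ℝ → ℝ} {S : ℝ} (h : Tendsto (jnPartial q ω u x) atTop (𝓝 S)) :
    jnSum q ω u x = (x * (1 - q) - ω) * S := by
  rw [jnSum, h.limUnder_eq]

lemma jnSum_congr {u v : ℝ → ℝ} (h : ∀ k, u (jnPoint q ω x k) = v (jnPoint q ω x k)) :
    jnSum q ω u x = jnSum q ω v x := by
  have : jnPartial q ω u x = jnPartial q ω v x :=
    funext fun n => Finset.sum_congr rfl fun k _ => by rw [h]
  rw [jnSum, jnSum, this]

lemma jnSum_sub {u v : ℝ → ℝ} (hu : JNConvergesAt q ω u x) (hv : JNConvergesAt q ω v x) :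
    jnSum q ω (fun t => u t - v t) x = jnSum q ω u x - jnSum q ω v x := by
  obtain ⟨S, hS⟩ := hu
  obtain ⟨T, hT⟩ := hv
  have hST : Tendsto (jnPartial q ω (fun t => u t - v t) x) atTop (𝓝 (S - T)) :=
    (hS.sub hT).congr fun n => by simp only [jnPartial, mul_sub, Finset.sum_sub_distrib]
  rw [jnSum_eq_of_tendsto hS, jnSum_eq_of_tendsto hT, jnSum_eq_of_tendsto hST, mul_sub]

lemma mul_jnPartial_hahnDeriv (hq0 : q ≠ 0) (hq1 : q ≠ 1) (h : ℝ → ℝ) (x : ℝ) (n : ℕ) :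
    (x * (1 - q) - ω) * jnPartial q ω (hahnDeriv q ω h) x n = h x - h (jnPoint q ω x n) := by
  rcases eq_or_ne x (hahnOmega0 q ω) with rfl | hx
  · simp [mul_one_sub_sub_eq hq1, jnPoint_eq hq1]
  have hterm : ∀ k, (x * (1 - q) - ω) * (q ^ k * hahnDeriv q ω h (jnPoint q ω x k)) =
      h (jnPoint q ω x k) - h (jnPoint q ω x (k + 1)) := by
    intro k
    have hpk := jnPoint_ne_hahnOmega0 hq0 hq1 hx k
    have hc := mul_one_sub_sub_ne_zero hq1 hx
    have hqk := pow_ne_zero k hq0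
    have hstep : q * jnPoint q ω x k + ω - jnPoint q ω x k = -(q ^ k * (x * (1 - q) - ω)) := by
      rw [shift_sub_self hq1, jnPoint_eq hq1, mul_one_sub_sub_eq hq1]
      ring
    rw [hahnDeriv, if_neg hpk, jnPoint_succ hq1, hstep]
    field_simp
    ring
  rw [jnPartial, Finset.mul_sum, Finset.sum_congr rfl fun k _ => hterm k,
    Finset.sum_range_sub', jnPoint_zero]

lemma tendsto_jnPartial_hahnDeriv (hq0 : q ≠ 0) (hq : |q| < 1) {h : ℝ → ℝ}
    (hh : ContinuousAt h (hahnOmega0 q ω)) (hx : x ≠ hahnOmega0 q ω) :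
    Tendsto (jnPartial q ω (hahnDeriv q ω h) x) atTop
      (𝓝 ((h x - h (hahnOmega0 q ω)) / (x * (1 - q) - ω))) := by
  have hq1 : q ≠ 1 := ((le_abs_self q).trans_lt hq).ne
  refine ((tendsto_const_nhds.sub (hh.tendsto.comp (tendsto_jnPoint hq x))).div_const
    (x * (1 - q) - ω)).congr fun n => ?_
  rw [Function.comp_apply, ← mul_jnPartial_hahnDeriv hq0 hq1,
    mul_div_cancel_left₀ _ (mul_one_sub_sub_ne_zero hq1 hx)]

lemma jnSum_hahnDeriv (hq0 : q ≠ 0) (hq : |q| < 1) {h : ℝ → ℝ}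
    (hh : ContinuousAt h (hahnOmega0 q ω)) (x : ℝ) :
    jnSum q ω (hahnDeriv q ω h) x = h x - h (hahnOmega0 q ω) := by
  have hq1 : q ≠ 1 := ((le_abs_self q).trans_lt hq).ne
  rcases eq_or_ne x (hahnOmega0 q ω) with rfl | hx
  · simp [jnSum_hahnOmega0 hq1]
  rw [jnSum_eq_of_tendsto (tendsto_jnPartial_hahnDeriv hq0 hq hh hx),
    mul_div_cancel₀ _ (mul_one_sub_sub_ne_zero hq1 hx)]

lemma jnSum_mul_hahnDeriv (hq0 : q ≠ 0) (hq : |q| < 1) {f g : ℝ → ℝ}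
    (hf : DifferentiableAt ℝ f (hahnOmega0 q ω)) (hg : ContinuousAt g (hahnOmega0 q ω))
    (x : ℝ) :
    jnSum q ω (fun t => f t * hahnDeriv q ω g t) x =
      f x * g x - f (hahnOmega0 q ω) * g (hahnOmega0 q ω) -
        jnSum q ω (fun t => hahnDeriv q ω f t * g (q * t + ω)) x := by
  have hq1 : q ≠ 1 := ((le_abs_self q).trans_lt hq).ne
  rcases eq_or_ne x (hahnOmega0 q ω) with rfl | hx
  · simp [jnSum_hahnOmega0 hq1]
  have hfg : ContinuousAt (f * g) (hahnOmega0 q ω) := hf.continuousAt.mul hg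
  have hgσ : ContinuousAt (fun t => g (q * t + ω)) (hahnOmega0 q ω) := by
    refine ContinuousAt.comp ?_ (by fun_prop)
    rwa [shift_hahnOmega0 hq1]
  calc jnSum q ω (fun t => f t * hahnDeriv q ω g t) x
      = jnSum q ω (fun t => hahnDeriv q ω (f * g) t - hahnDeriv q ω f t * g (q * t + ω)) x :=
        jnSum_congr fun k => by
          rw [hahnDeriv_mul_of_ne hq1 f g (jnPoint_ne_hahnOmega0 hq0 hq1 hx k),
            add_sub_cancel_right]
    _ = jnSum q ω (hahnDeriv q ω (f * g)) x -
          jnSum q ω (fun t => hahnDeriv q ω f t * g (q * t + ω)) x :=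
        jnSum_sub ⟨_, tendsto_jnPartial_hahnDeriv hq0 hq hfg hx⟩
          (jnConvergesAt_of_continuousAt hq ((continuousAt_hahnDeriv hq1 hf).mul hgσ) x)
    _ = _ := by rw [jnSum_hahnDeriv hq0 hq hfg, Pi.mul_apply, Pi.mul_apply]

theorem jn_integration_by_parts_general (q ω : ℝ) (hq0 : 0 < q) (hq1 : q < 1)
    (I : Set ℝ) (hmem : hahnOmega0 q ω ∈ I)
    (f g : ℝ → ℝ)
    (hg : ContinuousAt g (hahnOmega0 q ω))
    (hfd : ∀ t ∈ I, HahnDiffAt q ω f t) :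
    ∀ a ∈ I, ∀ b ∈ I,
      jnIntegral q ω (fun t => f t * hahnDeriv q ω g t) a b =
        f b * g b - f a * g a -
          jnIntegral q ω (fun t => hahnDeriv q ω f t * g (q * t + ω)) a b := by
  intro a _ b _
  have hq : |q| < 1 := abs_lt.2 ⟨by linarith, hq1⟩
  have hf : DifferentiableAt ℝ f (hahnOmega0 q ω) := hfd _ hmem rfl
  rw [jnIntegral, jnIntegral, jnSum_mul_hahnDeriv hq0.ne' hq hf hg a,
    jnSum_mul_hahnDeriv hq0.ne' hq hf hg b]
  ring

/-- integration by parts for the Jackson–Nörlund integral. -/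
theorem jn_integration_by_parts (q ω : ℝ) (hq0 : 0 < q) (hq1 : q < 1)
    (hω : 0 < ω) (I : Set ℝ) (hI : I.OrdConnected) (hmem : hahnOmega0 q ω ∈ I)
    (f g : ℝ → ℝ)
    (hf : ContinuousAt f (hahnOmega0 q ω)) (hg : ContinuousAt g (hahnOmega0 q ω))
    (hfd : ∀ t ∈ I, HahnDiffAt q ω f t) (hgd : ∀ t ∈ I, HahnDiffAt q ω g t) :
    ∀ a ∈ I, ∀ b ∈ I,
      jnIntegral q ω (fun t => f t * hahnDeriv q ω g t) a b =
        f b * g b - f a * g a -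
          jnIntegral q ω (fun t => hahnDeriv q ω f t * g (q * t + ω)) a b :=
  jn_integration_by_parts_general q ω hq0 hq1 I hmem f g hg hfd
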